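/- arXiv:math/0603399 — 2 statements merged into one kernel-verified Lean document; each statement's English description precedes it below -/
import Mathlib

section
/- Define the relation ≲ on G = GL(n,ℤ) by: a ≲ ab iff for all x ∈ ℤⁿ, (0 < x and 0 < xab) implies 0 < xa, where < is the standard lexicographic order. For a, b ∈ G, the following are equivalent: (1) a ≲ ab; (2) N(ab) = N(a) ∪ N(b)a⁻¹; (3) N(ab) is the disjoint union of N(a) and N(b)a⁻¹; (4) N(a) ∩ N(b)a⁻¹ = ∅. -/
/-- `x > 0` in the standard lexicographic order on `ℤⁿ`. -/
def lexPos {n : ℕ} (x : Fin n → ℤ) : Prop :=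
  ∃ i, (∀ j, j < i → x j = 0) ∧ 0 < x i

/-- `a ≲ c` (for `c = ab`): for all `x`, `0 < x` and `0 < xc` imply `0 < xa`. -/
def Lesim {n : ℕ} (a c : Matrix.GeneralLinearGroup (Fin n) ℤ) : Prop :=
  ∀ x : Fin n → ℤ, lexPos x →
    lexPos (Matrix.vecMul x (c : Matrix (Fin n) (Fin n) ℤ)) →
    lexPos (Matrix.vecMul x (a : Matrix (Fin n) (Fin n) ℤ))

/-- `N(a) = {x ∈ ℤⁿ \ {0} : 0 < x ⟺ xa < 0}`. -/
def Nset {n : ℕ} (a : Matrix.GeneralLinearGroup (Fin n) ℤ) : Set (Fin n → ℤ) :=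
  {x | x ≠ 0 ∧ (lexPos x ↔ lexPos (-(Matrix.vecMul x (a : Matrix (Fin n) (Fin n) ℤ))))}


noncomputable instance lexLOACG {n : ℕ} : LinearOrder (Lex (Fin n → ℤ)) :=
  @Pi.Lex.linearOrder (Fin n) (fun _ => ℤ) _
    (inferInstanceAs (WellFoundedLT (Fin n))) _

lemma lexPos_iff' {n : ℕ} (x : Fin n → ℤ) :
    lexPos x ↔ (0 : Lex (Fin n → ℤ)) < toLex x := by
  constructor
  · rintro ⟨i, h1, h2⟩
    exact ⟨i, fun j hj => (h1 j hj).symm, h2⟩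
  · rintro ⟨i, h1, h2⟩
    exact ⟨i, fun j hj => (h1 j hj).symm, h2⟩

lemma not_lexPos_zero {n : ℕ} : ¬ lexPos (0 : Fin n → ℤ) := by
  rintro ⟨i, -, h⟩
  exact lt_irrefl _ h

lemma lexPos_neg_iff {n : ℕ} {x : Fin n → ℤ} (hx : x ≠ 0) :
    lexPos (-x) ↔ ¬ lexPos x := by
  rw [lexPos_iff', lexPos_iff']
  have h1 : toLex (-x) = -toLex x := rfl
  have hx' : toLex x ≠ 0 := fun h => hx (by simpa using congrArg ofLex h)
  rw [h1, neg_pos]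
  constructor
  · exact fun h h' => absurd h' (not_lt_of_gt h)
  · intro h
    letI : LinearOrder (Lex (Fin n → ℤ)) := lexLOACG
    rcases lt_trichotomy (toLex x) 0 with h' | h' | h'
    · exact h'
    · exact absurd h' hx'
    · exact absurd h' h

lemma vecMul_ne_zero {n : ℕ} (a : Matrix.GeneralLinearGroup (Fin n) ℤ)
    {x : Fin n → ℤ} (hx : x ≠ 0) :
    Matrix.vecMul x (a : Matrix (Fin n) (Fin n) ℤ) ≠ 0 := by
  intro h
  apply hx
  have := congrArg
    (fun y => Matrix.vecMul y ((a⁻¹ : Matrix.GeneralLinearGroup (Fin n) ℤ) :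
      Matrix (Fin n) (Fin n) ℤ)) h
  simpa [Matrix.vecMul_vecMul, ← Units.val_mul] using this

lemma mem_Nset_iff {n : ℕ} (a : Matrix.GeneralLinearGroup (Fin n) ℤ)
    (y : Fin n → ℤ) :
    y ∈ Nset a ↔ y ≠ 0 ∧
      ¬ (lexPos y ↔ lexPos (Matrix.vecMul y (a : Matrix (Fin n) (Fin n) ℤ))) := by
  unfold Nset
  constructor
  · rintro ⟨hy, h⟩
    rw [lexPos_neg_iff (vecMul_ne_zero a hy)] at h
    exact ⟨hy, by tauto⟩
  · rintro ⟨hy, h⟩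
    refine ⟨hy, ?_⟩
    rw [lexPos_neg_iff (vecMul_ne_zero a hy)]
    tauto

/-- Equivalence of (1) `a ≲ ab`, (2) `N(ab) = N(a) ∪ N(b)a⁻¹`,
(3) `N(ab)` is the disjoint union of `N(a)` and `N(b)a⁻¹`, and
(4) `N(a) ∩ N(b)a⁻¹ = ∅`. -/
theorem stmt7 {n : ℕ} (a b : Matrix.GeneralLinearGroup (Fin n) ℤ) :
    [Lesim a (a * b),
     Nset (a * b) = Nset a ∪
       ((fun x => Matrix.vecMul x ((a⁻¹ : Matrix.GeneralLinearGroup (Fin n) ℤ) :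
          Matrix (Fin n) (Fin n) ℤ)) '' Nset b),
     Nset (a * b) = Nset a ∪
       ((fun x => Matrix.vecMul x ((a⁻¹ : Matrix.GeneralLinearGroup (Fin n) ℤ) :
          Matrix (Fin n) (Fin n) ℤ)) '' Nset b) ∧
       Disjoint (Nset a)
         ((fun x => Matrix.vecMul x ((a⁻¹ : Matrix.GeneralLinearGroup (Fin n) ℤ) :
            Matrix (Fin n) (Fin n) ℤ)) '' Nset b),
     Nset a ∩
       ((fun x => Matrix.vecMul x ((a⁻¹ : Matrix.GeneralLinearGroup (Fin n) ℤ) :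
          Matrix (Fin n) (Fin n) ℤ)) '' Nset b) = ∅].TFAE := by
  set A : Matrix (Fin n) (Fin n) ℤ := (a : Matrix (Fin n) (Fin n) ℤ) with hA
  set A' : Matrix (Fin n) (Fin n) ℤ :=
    ((a⁻¹ : Matrix.GeneralLinearGroup (Fin n) ℤ) : Matrix (Fin n) (Fin n) ℤ) with hA'
  have hAA' : A * A' = 1 := by simp [hA, hA', ← Units.val_mul]
  have hA'A : A' * A = 1 := by simp [hA, hA', ← Units.val_mul]
  -- membership in the image set
  have himg : ∀ y : Fin n → ℤ,
      (y ∈ (fun x => Matrix.vecMul x A') '' Nset b ↔ Matrix.vecMul y A ∈ Nset b) := by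
    intro y
    constructor
    · rintro ⟨x, hx, rfl⟩
      simpa [Matrix.vecMul_vecMul, hA'A] using hx
    · intro h
      exact ⟨Matrix.vecMul y A, h, by simp [Matrix.vecMul_vecMul, hAA']⟩
  have hab : ∀ y : Fin n → ℤ,
      Matrix.vecMul y ((a * b : Matrix.GeneralLinearGroup (Fin n) ℤ) :
        Matrix (Fin n) (Fin n) ℤ)
      = Matrix.vecMul (Matrix.vecMul y A) (b : Matrix (Fin n) (Fin n) ℤ) := by
    intro y
    simp [Matrix.vecMul_vecMul, hA, Units.val_mul]
  -- characterize the three sets via signs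
  have hNab : ∀ y : Fin n → ℤ,
      y ∈ Nset (a * b) ↔ y ≠ 0 ∧
        ¬ (lexPos y ↔ lexPos (Matrix.vecMul (Matrix.vecMul y A)
            (b : Matrix (Fin n) (Fin n) ℤ))) := by
    intro y; rw [mem_Nset_iff, hab]
  have hNa : ∀ y : Fin n → ℤ,
      y ∈ Nset a ↔ y ≠ 0 ∧ ¬ (lexPos y ↔ lexPos (Matrix.vecMul y A)) := by
    intro y; rw [mem_Nset_iff]
  have hNb : ∀ y : Fin n → ℤ,
      y ∈ (fun x => Matrix.vecMul x A') '' Nset b ↔ y ≠ 0 ∧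
        ¬ (lexPos (Matrix.vecMul y A) ↔ lexPos (Matrix.vecMul (Matrix.vecMul y A)
            (b : Matrix (Fin n) (Fin n) ℤ))) := by
    intro y
    rw [himg, mem_Nset_iff]
    constructor
    · rintro ⟨h1, h2⟩
      refine ⟨fun h => h1 ?_, h2⟩
      subst h; simp [Matrix.zero_vecMul]
    · rintro ⟨h1, h2⟩
      exact ⟨vecMul_ne_zero a h1, h2⟩
  tfae_have 1 → 4
  · intro h1
    ext y
    simp only [Set.mem_inter_iff, Set.mem_empty_iff_false, iff_false]
    rintro ⟨hya, hyb⟩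
    rw [hNa] at hya
    rw [hNb] at hyb
    obtain ⟨hy0, hPQ⟩ := hya
    obtain ⟨-, hQR⟩ := hyb
    by_cases hP : lexPos y
    · have hQ : ¬ lexPos (Matrix.vecMul y A) := by tauto
      have hR : lexPos (Matrix.vecMul (Matrix.vecMul y A)
          (b : Matrix (Fin n) (Fin n) ℤ)) := by tauto
      exact hQ (h1 y hP (by rw [hab]; exact hR))
    · -- apply to -y
      have hPn : lexPos (-y) := (lexPos_neg_iff hy0).2 hP
      have hQ : lexPos (Matrix.vecMul y A) := by tauto
      have hR : ¬ lexPos (Matrix.vecMul (Matrix.vecMul y A)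
          (b : Matrix (Fin n) (Fin n) ℤ)) := by tauto
      have hRn : lexPos (Matrix.vecMul (-y) ((a * b : Matrix.GeneralLinearGroup (Fin n) ℤ) :
          Matrix (Fin n) (Fin n) ℤ)) := by
        rw [Matrix.neg_vecMul, lexPos_neg_iff (vecMul_ne_zero (a * b) hy0), hab]
        exact hR
      have := h1 (-y) hPn hRn
      rw [Matrix.neg_vecMul, lexPos_neg_iff (vecMul_ne_zero a hy0)] at this
      exact this hQ
  tfae_have 4 → 1
  · intro h4 x hP hR
    rw [hab] at hR
    by_contra hQ
    have hx0 : x ≠ 0 := fun h => not_lexPos_zero (h ▸ hP)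
    have hxmem : x ∈ Nset a ∩ (fun x => Matrix.vecMul x A') '' Nset b := by
      refine ⟨(hNa x).2 ⟨hx0, by tauto⟩, (hNb x).2 ⟨hx0, by tauto⟩⟩
    rw [h4] at hxmem
    exact hxmem
  tfae_have 4 → 2
  · intro h4
    ext y
    rw [hNab, Set.mem_union, hNa, hNb]
    constructor
    · rintro ⟨hy0, hPR⟩
      by_cases hPQ : lexPos y ↔ lexPos (Matrix.vecMul y A)
      · exact Or.inr ⟨hy0, by tauto⟩
      · exact Or.inl ⟨hy0, hPQ⟩
    · rintro (⟨hy0, hPQ⟩ | ⟨hy0, hQR⟩)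
      · refine ⟨hy0, fun hPR => ?_⟩
        have : y ∈ Nset a ∩ (fun x => Matrix.vecMul x A') '' Nset b :=
          ⟨(hNa y).2 ⟨hy0, hPQ⟩, (hNb y).2 ⟨hy0, by tauto⟩⟩
        rw [h4] at this; exact this
      · refine ⟨hy0, fun hPR => ?_⟩
        have : y ∈ Nset a ∩ (fun x => Matrix.vecMul x A') '' Nset b :=
          ⟨(hNa y).2 ⟨hy0, by tauto⟩, (hNb y).2 ⟨hy0, hQR⟩⟩
        rw [h4] at this; exact this
  tfae_have 2 → 4
  · intro h2
    ext y
    simp only [Set.mem_inter_iff, Set.mem_empty_iff_false, iff_false]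
    rintro ⟨hya, hyb⟩
    have hyab : y ∈ Nset (a * b) := by
      rw [h2]; exact Or.inl hya
    rw [hNa] at hya
    rw [hNb] at hyb
    rw [hNab] at hyab
    tauto
  tfae_have 3 → 2
  · exact fun h => h.1
  tfae_have 4 → 3
  · intro h4
    refine ⟨tfae_4_to_2 h4, ?_⟩
    rw [Set.disjoint_iff_inter_eq_empty]
    exact h4
  tfae_finish
end

section
/- Let G* be the free monoid on a pseudo-Garside germ's group G, with the rewriting relation → generated by u(a)(b*c)v → u(a*b)(c)v whenever a*b and b*c are defined. Then → satisfies the diamond property: if u → v and u → w, there exists x with v → x and w → x. -/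
/-- A pseudo-Garside germ `(G, H, ≤, w₀)`: groups `H ⊆ G`, a lattice order on
`G/H` (encoded by the preorder `lesim` on `G`, writing `a ≲ b` for `aH ≤ bH`)
with least element `H` and greatest element `w₀H`, satisfying (PG2) and (PG3).
`a*b` is defined (and equals `ab`) iff `lesim a (a*b)`. -/
structure PseudoGarsideGerm (G : Type*) [Group G] where
  H : Subgroup G
  lesim : G → G → Prop
  w₀ : G
  refl : ∀ a, lesim a a
  trans : ∀ a b c, lesim a b → lesim b c → lesim a c
  /-- `≤` is antisymmetric as an order on cosets. -/
  antisymm : ∀ a b, lesim a b → lesim b a → a⁻¹ * b ∈ H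
  /-- `lesim` only depends on the cosets. -/
  coset_congr : ∀ a b h h', h ∈ H → h' ∈ H → lesim a b → lesim (a * h) (b * h')
  /-- `H` is the least element. -/
  least : ∀ a, lesim 1 a
  /-- `w₀H` is the greatest element. -/
  greatest : ∀ a, lesim a w₀
  /-- Any two cosets have a join. -/
  sup_exists : ∀ a b, ∃ d, lesim a d ∧ lesim b d ∧ ∀ e, lesim a e → lesim b e → lesim d e
  /-- Any two cosets have a meet. -/
  inf_exists : ∀ a b, ∃ d, lesim d a ∧ lesim d b ∧ ∀ e, lesim e a → lesim e b → lesim e d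
  /-- (PG2): `(a*b)*c` is defined iff `a*(b*c)` is. -/
  pg2 : ∀ a b c, (lesim a (a * b) ∧ lesim (a * b) (a * b * c)) ↔
    (lesim b (b * c) ∧ lesim a (a * b * c))
  /-- (PG3): `a ≲ b` iff `w₀aw₀⁻¹ ≲ w₀bw₀⁻¹`. -/
  pg3 : ∀ a b, lesim a b ↔ lesim (w₀ * a * w₀⁻¹) (w₀ * b * w₀⁻¹)

/-- The rewriting relation on the free monoid `G*` (words over `G`):
`u (a)(b*c) v → u (a*b)(c) v` whenever `a*b` and `b*c` are defined. -/
def GermRw {G : Type*} [Group G] (Γ : PseudoGarsideGerm G) (u v : List G) : Prop :=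
  ∃ (p q : List G) (a b c : G), Γ.lesim a (a * b) ∧ Γ.lesim b (b * c) ∧
    u = p ++ [a, b * c] ++ q ∧ v = p ++ [a * b, c] ++ q

/-!
Two rewrites of a word act on the same pair of adjacent letters, on overlapping pairs, or on
disjoint pairs. Disjoint rewrites commute, and overlapping ones are reconciled by (PG2). The two
rewrites `[a, e] → [a b₁, b₁⁻¹ e]` and `[a, e] → [a b₂, b₂⁻¹ e]` of the same pair are both
rewritten to `[a d, d⁻¹ e]`, where `d` is the join of `b₁` and `b₂`: by (PG2), `a * b` is defined
iff `b ≲ a⁻¹ w₀`, so `a * d` is still defined.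
-/

theorem List.append_pair_append_eq_cases {α : Type*} {p₁ p₂ q₁ q₂ : List α} {x₁ y₁ x₂ y₂ : α}
    (h : p₁ ++ [x₁, y₁] ++ q₁ = p₂ ++ [x₂, y₂] ++ q₂) (hle : p₁.length ≤ p₂.length) :
    (p₁ = p₂ ∧ x₁ = x₂ ∧ y₁ = y₂ ∧ q₁ = q₂) ∨
    (p₂ = p₁ ++ [x₁] ∧ y₁ = x₂ ∧ q₁ = y₂ :: q₂) ∨
    ∃ r, p₂ = p₁ ++ [x₁, y₁] ++ r ∧ q₁ = r ++ [x₂, y₂] ++ q₂ := by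
  simp only [List.append_assoc] at h
  obtain ⟨s, rfl⟩ : ∃ s, p₂ = p₁ ++ s := by
    rcases List.append_eq_append_iff.mp h with ⟨s, hs, -⟩ | ⟨s, rfl, -⟩
    · exact ⟨s, hs⟩
    · exact ⟨[], by simp_all⟩
  simp only [List.append_assoc, List.append_cancel_left_eq] at h
  rcases s with _ | ⟨z, _ | ⟨z', t⟩⟩ <;> simp_all

namespace PseudoGarsideGerm

variable {G : Type*} [Group G] (Γ : PseudoGarsideGerm G)

theorem lesim_mul_iff_lesim_inv_mul_w₀ (a b : G) :
    Γ.lesim a (a * b) ↔ Γ.lesim b (a⁻¹ * Γ.w₀) := by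
  have h := Γ.pg2 a b (b⁻¹ * a⁻¹ * Γ.w₀)
  rw [show a * b * (b⁻¹ * a⁻¹ * Γ.w₀) = Γ.w₀ by group,
    show b * (b⁻¹ * a⁻¹ * Γ.w₀) = a⁻¹ * Γ.w₀ by group] at h
  exact ⟨fun hab ↦ (h.mp ⟨hab, Γ.greatest _⟩).1, fun hb ↦ (h.mpr ⟨hb, Γ.greatest _⟩).1⟩

variable {Γ}

theorem lesim_inv_mul_inv_mul {x y z : G} (hxy : Γ.lesim x y) (hyz : Γ.lesim y z) :
    Γ.lesim (x⁻¹ * y) (x⁻¹ * z) := by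
  have h := (Γ.pg2 x (x⁻¹ * y) (y⁻¹ * z)).mp
  simp only [mul_inv_cancel_left] at h
  simpa [mul_assoc] using (h ⟨hxy, hyz⟩).1

theorem lesim_mul_mul {a b d : G} (hbd : Γ.lesim b d) (had : Γ.lesim a (a * d)) :
    Γ.lesim (a * b) (a * d) := by
  have h := (Γ.pg2 a b (b⁻¹ * d)).mpr
  simp only [mul_inv_cancel_left, mul_assoc] at h
  exact (h ⟨hbd, had⟩).2

end PseudoGarsideGerm

open PseudoGarsideGerm Relation

section GermRw

variable {G : Type*} [Group G] {Γ : PseudoGarsideGerm G}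

theorem germRw_pair {a b c : G} (hab : Γ.lesim a (a * b)) (hbc : Γ.lesim b (b * c)) :
    GermRw Γ [a, b * c] [a * b, c] :=
  ⟨[], [], a, b, c, hab, hbc, rfl, rfl⟩

theorem GermRw.append_append {u v : List G} (h : GermRw Γ u v) (p q : List G) :
    GermRw Γ (p ++ u ++ q) (p ++ v ++ q) := by
  obtain ⟨p', q', a, b, c, hab, hbc, rfl, rfl⟩ := h
  exact ⟨p ++ p', q' ++ q, a, b, c, hab, hbc, by simp, by simp⟩

theorem join_germRw_append_append {u v : List G} (h : Join (GermRw Γ) u v) (p q : List G) :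
    Join (GermRw Γ) (p ++ u ++ q) (p ++ v ++ q) :=
  let ⟨x, hux, hvx⟩ := h
  ⟨p ++ x ++ q, hux.append_append p q, hvx.append_append p q⟩

theorem join_germRw_of_mul_eq_mul {a b₁ c₁ b₂ c₂ : G}
    (hab₁ : Γ.lesim a (a * b₁)) (hbc₁ : Γ.lesim b₁ (b₁ * c₁))
    (hab₂ : Γ.lesim a (a * b₂)) (hbc₂ : Γ.lesim b₂ (b₂ * c₂)) (he : b₁ * c₁ = b₂ * c₂) :
    Join (GermRw Γ) [a * b₁, c₁] [a * b₂, c₂] := by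
  obtain ⟨d, hb₁d, hb₂d, hd_le⟩ := Γ.sup_exists b₁ b₂
  have hde : Γ.lesim d (b₁ * c₁) := hd_le _ hbc₁ (he ▸ hbc₂)
  have had : Γ.lesim a (a * d) := by
    rw [lesim_mul_iff_lesim_inv_mul_w₀] at hab₁ hab₂ ⊢
    exact hd_le _ hab₁ hab₂
  have step {b c : G} (hab : Γ.lesim a (a * b)) (hbd : Γ.lesim b d) (hbc : Γ.lesim b (b * c))
      (hbce : b * c = b₁ * c₁) : GermRw Γ [a * b, c] [a * d, d⁻¹ * (b₁ * c₁)] := by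
    have := germRw_pair (a := a * b) (b := b⁻¹ * d) (c := d⁻¹ * (b₁ * c₁))
      (by simpa [mul_assoc] using lesim_mul_mul hbd had)
      (by simpa [mul_assoc] using lesim_inv_mul_inv_mul hbd (hbce ▸ hde))
    simpa [mul_assoc, ← hbce] using this
  exact ⟨_, step hab₁ hb₁d hbc₁ rfl, step hab₂ hb₂d hbc₂ he.symm⟩

theorem join_germRw_of_overlap {a b c b' c' : G}
    (hab : Γ.lesim a (a * b)) (hbc : Γ.lesim b (b * c))
    (hbcb' : Γ.lesim (b * c) (b * c * b')) (hb'c' : Γ.lesim b' (b' * c')) :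
    Join (GermRw Γ) [a * b, c, b' * c'] [a, b * c * b', c'] := by
  obtain ⟨hcb', hbcb'⟩ := (Γ.pg2 b c b').mp ⟨hbc, hbcb'⟩
  refine ⟨[a * b, c * b', c'], ?_, ?_⟩
  · simpa using (germRw_pair hcb' hb'c').append_append [a * b] []
  · simpa [mul_assoc] using
      (germRw_pair hab (by rwa [← mul_assoc])).append_append [] [c']

theorem join_germRw_of_disjoint {u₁ v₁ u₂ v₂ : List G}
    (h₁ : GermRw Γ u₁ v₁) (h₂ : GermRw Γ u₂ v₂) (p r q : List G) :
    Join (GermRw Γ) (p ++ v₁ ++ (r ++ u₂ ++ q)) (p ++ u₁ ++ r ++ v₂ ++ q) :=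
  ⟨p ++ v₁ ++ r ++ v₂ ++ q, by simpa using h₂.append_append (p ++ v₁ ++ r) q,
    by simpa using h₁.append_append p (r ++ v₂ ++ q)⟩

end GermRw

/-- The rewriting relation satisfies the diamond property. -/
theorem stmt12 {G : Type*} [Group G] (Γ : PseudoGarsideGerm G) (u v w : List G)
    (huv : GermRw Γ u v) (huw : GermRw Γ u w) :
    ∃ x, GermRw Γ v x ∧ GermRw Γ w x := by
  obtain ⟨p₁, q₁, a₁, b₁, c₁, hab₁, hbc₁, hu₁, rfl⟩ := huv
  obtain ⟨p₂, q₂, a₂, b₂, c₂, hab₂, hbc₂, hu₂, rfl⟩ := huw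
  wlog hle : p₁.length ≤ p₂.length generalizing p₁ q₁ a₁ b₁ c₁ p₂ q₂ a₂ b₂ c₂
  · obtain ⟨x, h₂, h₁⟩ :=
      this p₂ q₂ a₂ b₂ c₂ hab₂ hbc₂ hu₂ p₁ q₁ a₁ b₁ c₁ hab₁ hbc₁ hu₁ (by omega)
    exact ⟨x, h₁, h₂⟩
  rcases List.append_pair_append_eq_cases (hu₁.symm.trans hu₂) hle with
    ⟨rfl, rfl, he, rfl⟩ | ⟨rfl, rfl, rfl⟩ | ⟨r, rfl, rfl⟩
  · exact join_germRw_append_append (join_germRw_of_mul_eq_mul hab₁ hbc₁ hab₂ hbc₂ he) p₁ q₁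
  · simpa [Join] using
      join_germRw_append_append (join_germRw_of_overlap hab₁ hbc₁ hab₂ hbc₂) p₁ q₂
  · exact join_germRw_of_disjoint (germRw_pair hab₁ hbc₁) (germRw_pair hab₂ hbc₂) p₁ r q₂
end
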